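/- arXiv:1210.3488 — 6 statements merged into one kernel-verified Lean document; each statement's English description precedes it below -/
import Mathlib

section
/- Let G = [A M; N B] be a generalized matrix algebra over a commutative ring R whose bimodule M is loyal. Then for every element λ ∈ π_A(Z(G)) and every nonzero element a ∈ A, the relation λa = 0 implies λ = 0. -/
/-- A realization of the `R`-algebra `G` as a generalized matrix algebra
`[A M; N B]` arising from a Morita context `(A, B, M, N, Φ, Ψ)`:
`G` decomposes `R`-linearly as `A ⊕ M ⊕ N ⊕ B` (via the injections `ιA, ιM, ιN, ιB`
and the projections `pA, pM, pN, pB`), and multiplication in `G` follows the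
matrix-like multiplication rules.  The bimodule actions of `A` and `B` on `M` and `N`
and the pairings `Φ : M ⊗ N → A`, `Ψ : N ⊗ M → B` are recovered from the
multiplication of `G`; the requirement that the corresponding products land in the
appropriate corner is expressed by the `mul_*` fields.  The standing assumption that
`M` is faithful as a left `A`-module and as a right `B`-module is included. -/
structure GMA (R A B M N G : Type*) [CommRing R]
    [Ring A] [Algebra R A] [Ring B] [Algebra R B]
    [AddCommGroup M] [Module R M] [AddCommGroup N] [Module R N]
    [Ring G] [Algebra R G] where
  ιA : A →ₗ[R] G
  ιB : B →ₗ[R] G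
  ιM : M →ₗ[R] G
  ιN : N →ₗ[R] G
  pA : G →ₗ[R] A
  pB : G →ₗ[R] B
  pM : G →ₗ[R] M
  pN : G →ₗ[R] N
  decomp : ∀ g : G, g = ιA (pA g) + ιM (pM g) + ιN (pN g) + ιB (pB g)
  pA_ιA : ∀ a, pA (ιA a) = a
  pA_ιM : ∀ m, pA (ιM m) = 0
  pA_ιN : ∀ n, pA (ιN n) = 0
  pA_ιB : ∀ b, pA (ιB b) = 0
  pM_ιA : ∀ a, pM (ιA a) = 0
  pM_ιM : ∀ m, pM (ιM m) = m
  pM_ιN : ∀ n, pM (ιN n) = 0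
  pM_ιB : ∀ b, pM (ιB b) = 0
  pN_ιA : ∀ a, pN (ιA a) = 0
  pN_ιM : ∀ m, pN (ιM m) = 0
  pN_ιN : ∀ n, pN (ιN n) = n
  pN_ιB : ∀ b, pN (ιB b) = 0
  pB_ιA : ∀ a, pB (ιA a) = 0
  pB_ιM : ∀ m, pB (ιM m) = 0
  pB_ιN : ∀ n, pB (ιN n) = 0
  pB_ιB : ∀ b, pB (ιB b) = b
  one_def : (1 : G) = ιA 1 + ιB 1
  mul_AA : ∀ a a', ιA a * ιA a' = ιA (a * a')
  mul_BB : ∀ b b', ιB b * ιB b' = ιB (b * b')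
  mul_AM : ∀ a m, ιA a * ιM m ∈ LinearMap.range ιM
  mul_MB : ∀ m b, ιM m * ιB b ∈ LinearMap.range ιM
  mul_BN : ∀ b n, ιB b * ιN n ∈ LinearMap.range ιN
  mul_NA : ∀ n a, ιN n * ιA a ∈ LinearMap.range ιN
  mul_MN : ∀ m n, ιM m * ιN n ∈ LinearMap.range ιA
  mul_NM : ∀ n m, ιN n * ιM m ∈ LinearMap.range ιB
  mul_AB : ∀ a b, ιA a * ιB b = 0
  mul_BA : ∀ b a, ιB b * ιA a = 0
  mul_AN : ∀ a n, ιA a * ιN n = 0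
  mul_NB : ∀ n b, ιN n * ιB b = 0
  mul_MA : ∀ m a, ιM m * ιA a = 0
  mul_BM : ∀ b m, ιB b * ιM m = 0
  mul_MM : ∀ m m', ιM m * ιM m' = 0
  mul_NN : ∀ n n', ιN n * ιN n' = 0
  faithful_left : ∀ a : A, (∀ m : M, ιA a * ιM m = 0) → a = 0
  faithful_right : ∀ b : B, (∀ m : M, ιM m * ιB b = 0) → b = 0

/-- **Lemma 3.1.**  Let `G = [A M; N B]` be a generalized matrix algebra over a
commutative ring `R` whose bimodule `M` is loyal.  Then for every
`λ ∈ π_A(Z(G))` and every nonzero `a ∈ A`, the relation `λ a = 0` implies `λ = 0`. -/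
theorem stmt0 (R A B M N G : Type*) [CommRing R]
    [Ring A] [Algebra R A] [Ring B] [Algebra R B]
    [AddCommGroup M] [Module R M] [AddCommGroup N] [Module R N]
    [Ring G] [Algebra R G]
    (h : GMA R A B M N G)
    (hMN : (∃ m : M, m ≠ 0) ∨ (∃ n : N, n ≠ 0))
    (hloyal : ∀ (a : A) (b : B), (∀ m : M, h.ιA a * h.ιM m * h.ιB b = 0) → a = 0 ∨ b = 0)
    (lam : A) (hlam : lam ∈ h.pA '' (Subring.center G : Set G))
    (a : A) (ha : a ≠ 0) (hla : lam * a = 0) :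
    lam = 0 := by
  obtain ⟨z, hz, rfl⟩ := hlam
  rw [SetLike.mem_coe, Subring.mem_center_iff] at hz
  set la := h.pA z with hla_def
  set mu := h.pB z with hmu_def
  set m0 := h.pM z with hm0_def
  set n0 := h.pN z with hn0_def
  have hdec : z = h.ιA la + h.ιM m0 + h.ιN n0 + h.ιB mu := h.decomp z
  -- Step 1: la commutes with every element of A
  have hcomm : ∀ a' : A, a' * la = la * a' := by
    intro a'
    have e := hz (h.ιA a')
    rw [hdec] at e
    obtain ⟨m', hm'⟩ := h.mul_AM a' m0
    obtain ⟨n', hn'⟩ := h.mul_NA n0 a'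
    have e2 := congrArg h.pA e
    simp only [mul_add, add_mul, h.mul_AA, h.mul_AN, h.mul_AB, h.mul_MA, h.mul_BA,
      ← hm', ← hn', map_add, map_zero, h.pA_ιA, h.pA_ιM, h.pA_ιN,
      add_zero, zero_add] at e2
    exact e2
  -- Step 2: ιA la * ιM m = ιM m * ιB mu for all m
  have hkey : ∀ m : M, h.ιA la * h.ιM m = h.ιM m * h.ιB mu := by
    intro m
    have e := hz (h.ιM m)
    rw [hdec] at e
    obtain ⟨a1, ha1⟩ := h.mul_MN m n0
    obtain ⟨m1, hm1⟩ := h.mul_MB m mu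
    obtain ⟨m2, hm2⟩ := h.mul_AM la m
    obtain ⟨b1, hb1⟩ := h.mul_NM n0 m
    have e2 := congrArg h.pM e
    simp only [mul_add, add_mul, h.mul_MA, h.mul_MM, h.mul_BM,
      ← ha1, ← hm1, ← hm2, ← hb1, map_add, map_zero,
      h.pM_ιA, h.pM_ιM, h.pM_ιB, add_zero, zero_add] at e2
    rw [← hm2, ← hm1]
    exact (congrArg h.ιM e2).symm
  -- Step 3: from lam * a = 0 get a * lam = 0
  have hal : a * la = 0 := by rw [hcomm a, hla]
  -- Step 4: loyalty gives mu = 0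
  have hzero : ∀ m : M, h.ιA a * h.ιM m * h.ιB mu = 0 := by
    intro m
    rw [mul_assoc, ← hkey m, ← mul_assoc, h.mul_AA, hal, map_zero, zero_mul]
  have hmu0 : mu = 0 := (hloyal a mu hzero).resolve_left ha
  -- Step 5: faithfulness gives la = 0
  apply h.faithful_left
  intro m
  rw [hkey m, hmu0, map_zero, mul_zero]
end

section
/- Let G = [A M; N B] be a generalized matrix algebra over a commutative ring R whose bimodule M is loyal. Then the center Z(G) of G is a (commutative) domain: if z, w ∈ Z(G) satisfy zw = 0, then z = 0 or w = 0. -/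
section Aux

variable {R A B M N G : Type*} [CommRing R]
    [Ring A] [Algebra R A] [Ring B] [Algebra R B]
    [AddCommGroup M] [Module R M] [AddCommGroup N] [Module R N]
    [Ring G] [Algebra R G] (h : GMA R A B M N G)

/-- A central element is diagonal. -/
lemma GMA.central_eq (z : G) (hz : z ∈ Subring.center G) :
    z = h.ιA (h.pA z) + h.ιB (h.pB z) := by
  have hc : ∀ g : G, g * z = z * g := Subring.mem_center_iff.mp hz
  have hd := h.decomp z
  set a := h.pA z with ha
  set m0 := h.pM z with hm0def
  set n0 := h.pN z with hn0def
  set b := h.pB z with hb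
  have key := hc (h.ιB 1)
  have hL : h.ιB 1 * z = h.ιB 1 * h.ιN n0 + h.ιB b := by
    conv_lhs => rw [hd]
    rw [mul_add, mul_add, mul_add, h.mul_BA, h.mul_BM, h.mul_BB, one_mul]
    abel
  have hR : z * h.ιB 1 = h.ιM m0 * h.ιB 1 + h.ιB b := by
    conv_lhs => rw [hd]
    rw [add_mul, add_mul, add_mul, h.mul_AB, h.mul_NB, h.mul_BB, mul_one]
    abel
  have heq : h.ιM m0 * h.ιB 1 = h.ιB 1 * h.ιN n0 := by
    have hk := key
    rw [hL, hR] at hk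
    exact add_right_cancel hk.symm
  obtain ⟨m', hm'⟩ := h.mul_MB m0 1
  obtain ⟨n', hn'⟩ := h.mul_BN 1 n0
  have hm0 : h.ιM m0 * h.ιB 1 = 0 := by
    have hmz : m' = 0 := by
      have := congrArg h.pM heq
      rw [← hm', ← hn', h.pM_ιM, h.pM_ιN] at this
      exact this
    rw [← hm', hmz, map_zero]
  have hn0 : h.ιB 1 * h.ιN n0 = 0 := by rw [← heq, hm0]
  have hm0' : m0 = 0 := by
    have h1 : h.ιM m0 = h.ιM m0 * 1 := (mul_one _).symm
    rw [h.one_def, mul_add, h.mul_MA, hm0, zero_add] at h1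
    have := congrArg h.pM h1
    rw [h.pM_ιM, map_zero] at this
    exact this
  have hn0' : n0 = 0 := by
    have h1 : h.ιN n0 = 1 * h.ιN n0 := (one_mul _).symm
    rw [h.one_def, add_mul, h.mul_AN, hn0, zero_add] at h1
    have := congrArg h.pN h1
    rw [h.pN_ιN, map_zero] at this
    exact this
  rw (occs := .pos [1]) [hd]
  rw [hm0', hn0', map_zero, map_zero]
  abel

/-- The diagonal entries of a central element commute past `M`. -/
lemma GMA.central_comm (z : G) (hz : z ∈ Subring.center G) (m : M) :
    h.ιA (h.pA z) * h.ιM m = h.ιM m * h.ιB (h.pB z) := by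
  have hc := (Subring.mem_center_iff.mp hz) (h.ιM m)
  rw (occs := .pos [1, 2]) [h.central_eq z hz] at hc
  rw [mul_add, add_mul, h.mul_MA, h.mul_BM, zero_add, add_zero] at hc
  exact hc.symm

end Aux

/-- **Lemma 3.2.**  Let `G = [A M; N B]` be a generalized matrix algebra over a
commutative ring `R` whose bimodule `M` is loyal.  Then the center `Z(G)` of `G`
is a (commutative) domain: if `z, w ∈ Z(G)` satisfy `z w = 0`, then `z = 0` or `w = 0`. -/
theorem stmt1 (R A B M N G : Type*) [CommRing R]
    [Ring A] [Algebra R A] [Ring B] [Algebra R B]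
    [AddCommGroup M] [Module R M] [AddCommGroup N] [Module R N]
    [Ring G] [Algebra R G]
    (h : GMA R A B M N G)
    (hMN : (∃ m : M, m ≠ 0) ∨ (∃ n : N, n ≠ 0))
    (hloyal : ∀ (a : A) (b : B), (∀ m : M, h.ιA a * h.ιM m * h.ιB b = 0) → a = 0 ∨ b = 0)
    (z w : G) (hz : z ∈ Subring.center G) (hw : w ∈ Subring.center G)
    (hzw : z * w = 0) :
    z = 0 ∨ w = 0 := by
  have hze := h.central_eq z hz
  have hwe := h.central_eq w hw
  set a1 := h.pA z with ha1
  set b1 := h.pB z with hb1'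
  set a2 := h.pA w with ha2'
  set b2 := h.pB w with hb2'
  have hmul : h.ιA (a1 * a2) + h.ιB (b1 * b2) = 0 := by
    have hexp : z * w = h.ιA (a1 * a2) + h.ιB (b1 * b2) := by
      rw (occs := .pos [1]) [hze]
      rw (occs := .pos [1]) [hwe]
      rw [add_mul, mul_add, mul_add, h.mul_AB, h.mul_BA, h.mul_AA, h.mul_BB]
      abel
    rw [← hexp, hzw]
  have ha : a1 * a2 = 0 := by
    have := congrArg h.pA hmul
    rw [map_add, h.pA_ιA, h.pA_ιB, add_zero, map_zero] at this
    exact this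
  have hb : b1 * b2 = 0 := by
    have := congrArg h.pB hmul
    rw [map_add, h.pB_ιA, h.pB_ιB, zero_add, map_zero] at this
    exact this
  have key : ∀ m : M, h.ιA a1 * h.ιM m * h.ιB b2 = 0 := by
    intro m
    rw [h.central_comm z hz m, mul_assoc, h.mul_BB, hb, map_zero, mul_zero]
  rcases hloyal a1 b2 key with h1 | h2
  · left
    have hb1z : b1 = 0 := by
      apply h.faithful_right
      intro m
      rw [← h.central_comm z hz m, ← ha1, h1, map_zero, zero_mul]
    rw [hze, h1, hb1z, map_zero, map_zero, add_zero]
  · right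
    have ha2z : a2 = 0 := by
      apply h.faithful_left
      intro m
      rw [h.central_comm w hw m, ← hb2', h2, map_zero, mul_zero]
    rw [hwe, ha2z, h2, map_zero, map_zero, add_zero]
end

section
/- Let G = [A M; N B] be a generalized matrix algebra over a commutative ring R (with M faithful as a left A-module and as a right B-module). Then G has no nonzero central ideals: every two-sided ideal I of G with I ⊆ Z(G) is the zero ideal. -/
section Aux
variable {R A B M N G : Type*} [CommRing R]
    [Ring A] [Algebra R A] [Ring B] [Algebra R B]
    [AddCommGroup M] [Module R M] [AddCommGroup N] [Module R N]
    [Ring G] [Algebra R G] (h : GMA R A B M N G)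

lemma GMA.ιA_one_mul_ιM (m : M) : h.ιA 1 * h.ιM m = h.ιM m := by
  have := one_mul (h.ιM m)
  rw [h.one_def, add_mul, h.mul_BM] at this
  simpa using this

lemma GMA.central_pM_pN (z : G) (hz : z ∈ Subring.center G) :
    h.pM z = 0 ∧ h.pN z = 0 := by
  have hc : h.ιA 1 * z = z * h.ιA 1 :=
    (Subring.mem_center_iff.mp hz (h.ιA 1))
  have hdec := h.decomp z
  have hl : h.ιA 1 * z = h.ιA (h.pA z) + h.ιM (h.pM z) := by
    conv_lhs => rw [hdec]
    rw [mul_add, mul_add, mul_add, h.mul_AA, h.ιA_one_mul_ιM,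
      h.mul_AN, h.mul_AB, one_mul, add_zero, add_zero]
  have hr : z * h.ιA 1 = h.ιA (h.pA z) + h.ιN (h.pN z) := by
    conv_lhs => rw [hdec]
    rw [add_mul, add_mul, add_mul, h.mul_AA, h.mul_MA]
    have : h.ιN (h.pN z) * h.ιA 1 = h.ιN (h.pN z) := by
      have := mul_one (h.ιN (h.pN z))
      rw [h.one_def, mul_add, h.mul_NB] at this
      simpa using this
    rw [this, h.mul_BA, mul_one, add_zero, add_zero]
  rw [hl, hr] at hc
  constructor
  · have := congrArg h.pM hc
    simpa [map_add, h.pM_ιA, h.pM_ιM, h.pM_ιN] using this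
  · have := congrArg h.pN hc.symm
    simpa [map_add, h.pN_ιA, h.pN_ιM, h.pN_ιN] using this

end Aux

/-- **Lemma 3.3.**  A generalized matrix algebra `G = [A M; N B]` over a commutative
ring `R` (with `M` faithful as a left `A`-module and as a right `B`-module) has no
nonzero central ideals: every two-sided ideal `I` of `G` with `I ⊆ Z(G)` is zero. -/
theorem stmt2 (R A B M N G : Type*) [CommRing R]
    [Ring A] [Algebra R A] [Ring B] [Algebra R B]
    [AddCommGroup M] [Module R M] [AddCommGroup N] [Module R N]
    [Ring G] [Algebra R G]
    (h : GMA R A B M N G)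
    (hMN : (∃ m : M, m ≠ 0) ∨ (∃ n : N, n ≠ 0))
    (I : TwoSidedIdeal G) (hI : (I : Set G) ⊆ (Subring.center G : Set G)) :
    ∀ x ∈ I, x = 0 := by
  intro x hx
  have hz := h.central_pM_pN x (hI hx)
  have hdec := h.decomp x
  rw [hz.1, hz.2, map_zero, map_zero, add_zero, add_zero] at hdec
  -- x = ιA a + ιB b
  set a := h.pA x with ha
  set b := h.pB x with hb
  have hbz : b = 0 := by
    apply h.faithful_right
    intro m
    have hmem : h.ιM m * x ∈ I := I.mul_mem_left _ _ hx
    have hcent := h.central_pM_pN _ (hI hmem)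
    have heq : h.ιM m * x = h.ιM m * h.ιB b := by
      rw [hdec, mul_add, h.mul_MA, zero_add]
    obtain ⟨m', hm'⟩ := h.mul_MB m b
    have : m' = 0 := by
      have := hcent.1
      rw [heq, ← hm'] at this
      simpa [h.pM_ιM] using this
    rw [← hm', this, map_zero]
  have haz : a = 0 := by
    apply h.faithful_left
    intro m
    have hmem : x * h.ιM m ∈ I := I.mul_mem_right _ _ hx
    have hcent := h.central_pM_pN _ (hI hmem)
    have heq : x * h.ιM m = h.ιA a * h.ιM m := by
      rw [hdec, add_mul, h.mul_BM, add_zero]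
    obtain ⟨m', hm'⟩ := h.mul_AM a m
    have : m' = 0 := by
      have := hcent.1
      rw [heq, ← hm'] at this
      simpa [h.pM_ιM] using this
    rw [← hm', this, map_zero]
  rw [hdec, haz, hbz, map_zero, map_zero, add_zero]
end

section
/- Let G = [A M; N B] be a 2-torsionfree generalized matrix algebra over a commutative ring R, let q : G × G → G be an R-bilinear map, and suppose the trace T_q(x) = q(x,x) is commuting. Then for every element x = [a m; 0 b] of G whose N-entry is zero, the N-entry of T_q(x) is zero. -/
section Helpers
variable {R A B M N G : Type*} [CommRing R]
    [Ring A] [Algebra R A] [Ring B] [Algebra R B]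
    [AddCommGroup M] [Module R M] [AddCommGroup N] [Module R N]
    [Ring G] [Algebra R G] (h : GMA R A B M N G)

lemma GMA.iN_pN_mul (u v : G) :
    h.ιN (h.pN (u * v)) =
      h.ιN (h.pN u) * h.ιA (h.pA v) + h.ιB (h.pB u) * h.ιN (h.pN v) := by
  obtain ⟨w1, hw1⟩ := h.mul_AM (h.pA u) (h.pM v)
  obtain ⟨w2, hw2⟩ := h.mul_MB (h.pM u) (h.pB v)
  obtain ⟨w3, hw3⟩ := h.mul_BN (h.pB u) (h.pN v)
  obtain ⟨w4, hw4⟩ := h.mul_NA (h.pN u) (h.pA v)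
  obtain ⟨w5, hw5⟩ := h.mul_MN (h.pM u) (h.pN v)
  obtain ⟨w6, hw6⟩ := h.mul_NM (h.pN u) (h.pM v)
  conv_lhs => rw [h.decomp u, h.decomp v]
  simp only [add_mul, mul_add, h.mul_AA, h.mul_BB, h.mul_AB, h.mul_BA, h.mul_AN,
    h.mul_NB, h.mul_MA, h.mul_BM, h.mul_MM, h.mul_NN, ← hw1, ← hw2, ← hw3, ← hw4,
    ← hw5, ← hw6, map_add, map_zero, h.pN_ιA, h.pN_ιM, h.pN_ιN, h.pN_ιB,
    add_zero, zero_add]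


lemma GMA.ιN_inj {n : N} (hn : h.ιN n = 0) : n = 0 := by
  have := congrArg h.pN hn
  simpa [h.pN_ιN] using this

lemma GMA.nA_one (n : N) : h.ιN n * h.ιA 1 = h.ιN n := by
  have h1 : h.ιN n * (h.ιA 1 + h.ιB 1) = h.ιN n := by rw [← h.one_def, mul_one]
  rwa [mul_add, h.mul_NB, add_zero] at h1

lemma GMA.bOne_n (n : N) : h.ιB 1 * h.ιN n = h.ιN n := by
  have h1 : (h.ιA 1 + h.ιB 1) * h.ιN n = h.ιN n := by rw [← h.one_def, one_mul]
  rwa [add_mul, h.mul_AN, zero_add] at h1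

end Helpers

section E
variable {R G : Type*} [CommRing R] [Ring G] [Algebra R G]

lemma Etri (q : G →ₗ[R] G →ₗ[R] G) (hcomm : ∀ x : G, q x x * x = x * q x x)
    (x y z : G) :
    (q x y + q y x) * z + (q x z + q z x) * y + (q y z + q z y) * x =
      z * (q x y + q y x) + y * (q x z + q z x) + x * (q y z + q z y) := by
  have h1 := hcomm (x + y + z)
  have h2 := hcomm (x + y)
  have h3 := hcomm (x + z)
  have h4 := hcomm (y + z)
  have h5 := hcomm x
  have h6 := hcomm y
  have h7 := hcomm z
  simp only [map_add, LinearMap.add_apply, add_mul, mul_add] at h1 h2 h3 h4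
  simp only [add_mul, mul_add]
  linear_combination (norm := abel1) h1 - h2 - h3 - h4 + h5 + h6 + h7
end E
/-- Let `G = [A M; N B]` be a `2`-torsionfree generalized matrix algebra over a
commutative ring `R`, let `q : G × G → G` be an `R`-bilinear map whose trace
`T_q(x) = q(x,x)` is commuting.  Then for every `x = [a m; 0 b]` in `G` whose
`N`-entry is zero, the `N`-entry of `T_q(x)` is zero. -/
theorem stmt3 (R A B M N G : Type*) [CommRing R]
    [Ring A] [Algebra R A] [Ring B] [Algebra R B]
    [AddCommGroup M] [Module R M] [AddCommGroup N] [Module R N]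
    [Ring G] [Algebra R G]
    (h : GMA R A B M N G)
    (hMN : (∃ m : M, m ≠ 0) ∨ (∃ n : N, n ≠ 0))
    (htf : ∀ g : G, g + g = 0 → g = 0)
    (q : G →ₗ[R] G →ₗ[R] G)
    (hcomm : ∀ x : G, q x x * x = x * q x x) :
    ∀ x : G, h.pN x = 0 → h.pN (q x x) = 0 := by
  -- small helpers
  have iNsum : ∀ t1 t2 : N, t1 + t2 = 0 → h.ιN t1 + h.ιN t2 = 0 := by
    intro t1 t2 ht
    have := congrArg h.ιN ht
    rwa [map_add, map_zero] at this
  have mulR : ∀ (t1 t2 : N) (a' : A), t1 + t2 = 0 →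
      h.ιN t1 * h.ιA a' + h.ιN t2 * h.ιA a' = 0 := by
    intro t1 t2 a' ht
    have : h.ιN (t1 + t2) * h.ιA a' = 0 := by rw [ht, map_zero, zero_mul]
    rwa [map_add, add_mul] at this
  have mulL : ∀ (t1 t2 : N) (b' : B), t1 + t2 = 0 →
      h.ιB b' * h.ιN t1 + h.ιB b' * h.ιN t2 = 0 := by
    intro t1 t2 b' ht
    have : h.ιB b' * h.ιN (t1 + t2) = 0 := by rw [ht, map_zero, mul_zero]
    rwa [map_add, mul_add] at this
  have pairN : ∀ t1 t2 : N, h.ιN t1 + h.ιN t2 = 0 → t1 + t2 = 0 := by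
    intro t1 t2 ht
    exact h.ιN_inj (by rw [map_add]; exact ht)
  -- fact p1
  have p1 : h.pN (q (h.ιA 1) (h.ιA 1)) = 0 := by
    have inst := congrArg (fun g : G => h.ιN (h.pN g)) (hcomm (h.ιA 1))
    simp only [h.iN_pN_mul, h.pN_ιA, h.pA_ιA, h.pB_ιA, map_zero, mul_zero,
      zero_mul, add_zero, zero_add, h.nA_one] at inst
    exact h.ιN_inj inst
  -- fact r1
  have r1 : h.pN (q (h.ιB 1) (h.ιB 1)) = 0 := by
    have inst := congrArg (fun g : G => h.ιN (h.pN g)) (hcomm (h.ιB 1))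
    simp only [h.iN_pN_mul, h.pN_ιB, h.pA_ιB, h.pB_ιB, map_zero, mul_zero,
      zero_mul, add_zero, zero_add, h.bOne_n] at inst
    exact h.ιN_inj inst.symm
  -- βa1
  have βa1 : ∀ a : A, h.pN (q (h.ιA a) (h.ιA 1)) + h.pN (q (h.ιA 1) (h.ιA a)) = 0 := by
    intro a
    have inst := congrArg (fun g : G => h.ιN (h.pN g))
      (Etri q hcomm (h.ιA a) (h.ιA 1) (h.ιA 1))
    simp only [map_add, add_mul, mul_add, h.iN_pN_mul, h.pA_ιA, h.pA_ιB, h.pA_ιM,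
      h.pB_ιA, h.pB_ιB, h.pB_ιM, h.pN_ιA, h.pN_ιB, h.pN_ιM, map_zero, mul_zero,
      zero_mul, add_zero, zero_add, h.nA_one, h.bOne_n, p1] at inst
    refine pairN _ _ (htf _ ?_)
    linear_combination (norm := abel1) inst
  -- pa
  have pa : ∀ a : A, h.pN (q (h.ιA a) (h.ιA a)) = 0 := by
    intro a
    have inst := congrArg (fun g : G => h.ιN (h.pN g))
      (Etri q hcomm (h.ιA a) (h.ιA a) (h.ιA 1))
    simp only [map_add, add_mul, mul_add, h.iN_pN_mul, h.pA_ιA, h.pA_ιB, h.pA_ιM,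
      h.pB_ιA, h.pB_ιB, h.pB_ιM, h.pN_ιA, h.pN_ιB, h.pN_ιM, map_zero, mul_zero,
      zero_mul, add_zero, zero_add, h.nA_one, h.bOne_n, p1] at inst
    have hm := mulR _ _ a (βa1 a)
    refine h.ιN_inj (htf _ ?_)
    linear_combination (norm := abel1) inst - hm - hm
  -- μ
  have μ : ∀ m : M, h.pN (q (h.ιM m) (h.ιM m)) = 0 := by
    intro m
    have inst := congrArg (fun g : G => h.ιN (h.pN g))
      (Etri q hcomm (h.ιM m) (h.ιM m) (h.ιA 1))
    simp only [map_add, add_mul, mul_add, h.iN_pN_mul, h.pA_ιA, h.pA_ιB, h.pA_ιM,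
      h.pB_ιA, h.pB_ιB, h.pB_ιM, h.pN_ιA, h.pN_ιB, h.pN_ιM, map_zero, mul_zero,
      zero_mul, add_zero, zero_add, h.nA_one, h.bOne_n] at inst
    refine h.ιN_inj (htf _ ?_)
    linear_combination (norm := abel1) inst
  -- ν1
  have ν1 : ∀ m : M, h.pN (q (h.ιA 1) (h.ιM m)) + h.pN (q (h.ιM m) (h.ιA 1)) = 0 := by
    intro m
    have inst := congrArg (fun g : G => h.ιN (h.pN g))
      (Etri q hcomm (h.ιA 1) (h.ιM m) (h.ιA 1))
    simp only [map_add, add_mul, mul_add, h.iN_pN_mul, h.pA_ιA, h.pA_ιB, h.pA_ιM,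
      h.pB_ιA, h.pB_ιB, h.pB_ιM, h.pN_ιA, h.pN_ιB, h.pN_ιM, map_zero, mul_zero,
      zero_mul, add_zero, zero_add, h.nA_one, h.bOne_n, p1] at inst
    refine pairN _ _ (htf _ ?_)
    linear_combination (norm := abel1) inst
  -- ν
  have ν : ∀ (a : A) (m : M),
      h.pN (q (h.ιA a) (h.ιM m)) + h.pN (q (h.ιM m) (h.ιA a)) = 0 := by
    intro a m
    have inst := congrArg (fun g : G => h.ιN (h.pN g))
      (Etri q hcomm (h.ιA a) (h.ιM m) (h.ιA 1))
    simp only [map_add, add_mul, mul_add, h.iN_pN_mul, h.pA_ιA, h.pA_ιB, h.pA_ιM,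
      h.pB_ιA, h.pB_ιB, h.pB_ιM, h.pN_ιA, h.pN_ιB, h.pN_ιM, map_zero, mul_zero,
      zero_mul, add_zero, zero_add, h.nA_one, h.bOne_n] at inst
    have hm := mulR _ _ a (ν1 m)
    refine pairN _ _ ?_
    linear_combination (norm := abel1) inst - hm
  -- βb1
  have βb1 : ∀ b : B, h.pN (q (h.ιB b) (h.ιB 1)) + h.pN (q (h.ιB 1) (h.ιB b)) = 0 := by
    intro b
    have inst := congrArg (fun g : G => h.ιN (h.pN g))
      (Etri q hcomm (h.ιB b) (h.ιB 1) (h.ιB 1))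
    simp only [map_add, add_mul, mul_add, h.iN_pN_mul, h.pA_ιA, h.pA_ιB, h.pA_ιM,
      h.pB_ιA, h.pB_ιB, h.pB_ιM, h.pN_ιA, h.pN_ιB, h.pN_ιM, map_zero, mul_zero,
      zero_mul, add_zero, zero_add, h.nA_one, h.bOne_n, r1] at inst
    refine pairN _ _ (htf _ ?_)
    linear_combination (norm := abel1) -inst
  -- rb
  have rb : ∀ b : B, h.pN (q (h.ιB b) (h.ιB b)) = 0 := by
    intro b
    have inst := congrArg (fun g : G => h.ιN (h.pN g))
      (Etri q hcomm (h.ιB b) (h.ιB b) (h.ιB 1))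
    simp only [map_add, add_mul, mul_add, h.iN_pN_mul, h.pA_ιA, h.pA_ιB, h.pA_ιM,
      h.pB_ιA, h.pB_ιB, h.pB_ιM, h.pN_ιA, h.pN_ιB, h.pN_ιM, map_zero, mul_zero,
      zero_mul, add_zero, zero_add, h.nA_one, h.bOne_n] at inst
    have hm := mulL _ _ b (βb1 b)
    refine h.ιN_inj (htf _ ?_)
    linear_combination (norm := abel1) -inst - hm - hm
  -- σ1
  have σ1 : ∀ m : M, h.pN (q (h.ιM m) (h.ιB 1)) + h.pN (q (h.ιB 1) (h.ιM m)) = 0 := by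
    intro m
    have inst := congrArg (fun g : G => h.ιN (h.pN g))
      (Etri q hcomm (h.ιM m) (h.ιB 1) (h.ιB 1))
    simp only [map_add, add_mul, mul_add, h.iN_pN_mul, h.pA_ιA, h.pA_ιB, h.pA_ιM,
      h.pB_ιA, h.pB_ιB, h.pB_ιM, h.pN_ιA, h.pN_ιB, h.pN_ιM, map_zero, mul_zero,
      zero_mul, add_zero, zero_add, h.nA_one, h.bOne_n] at inst
    refine pairN _ _ (htf _ ?_)
    linear_combination (norm := abel1) -inst
  -- σ
  have σ : ∀ (m : M) (b : B),
      h.pN (q (h.ιM m) (h.ιB b)) + h.pN (q (h.ιB b) (h.ιM m)) = 0 := by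
    intro m b
    have inst := congrArg (fun g : G => h.ιN (h.pN g))
      (Etri q hcomm (h.ιM m) (h.ιB b) (h.ιB 1))
    simp only [map_add, add_mul, mul_add, h.iN_pN_mul, h.pA_ιA, h.pA_ιB, h.pA_ιM,
      h.pB_ιA, h.pB_ιB, h.pB_ιM, h.pN_ιA, h.pN_ιB, h.pN_ιM, map_zero, mul_zero,
      zero_mul, add_zero, zero_add, h.nA_one, h.bOne_n] at inst
    have hm := mulL _ _ b (σ1 m)
    refine pairN _ _ ?_
    linear_combination (norm := abel1) -inst - hm
  -- w2
  have w2 : h.pN (q (h.ιA 1) (h.ιB 1)) + h.pN (q (h.ιB 1) (h.ιA 1)) = 0 := by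
    have inst := congrArg (fun g : G => h.ιN (h.pN g))
      (Etri q hcomm (h.ιA 1) (h.ιB 1) (h.ιA 1))
    simp only [map_add, add_mul, mul_add, h.iN_pN_mul, h.pA_ιA, h.pA_ιB, h.pA_ιM,
      h.pB_ιA, h.pB_ιB, h.pB_ιM, h.pN_ιA, h.pN_ιB, h.pN_ιM, map_zero, mul_zero,
      zero_mul, add_zero, zero_add, h.nA_one, h.bOne_n, p1] at inst
    refine pairN _ _ (htf _ ?_)
    linear_combination (norm := abel1) inst
  -- τ
  have τ : ∀ b : B, h.pN (q (h.ιB b) (h.ιA 1)) + h.pN (q (h.ιA 1) (h.ιB b)) = 0 := by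
    intro b
    have inst := congrArg (fun g : G => h.ιN (h.pN g))
      (Etri q hcomm (h.ιB b) (h.ιA 1) (h.ιB 1))
    simp only [map_add, add_mul, mul_add, h.iN_pN_mul, h.pA_ιA, h.pA_ιB, h.pA_ιM,
      h.pB_ιA, h.pB_ιB, h.pB_ιM, h.pN_ιA, h.pN_ιB, h.pN_ιM, map_zero, mul_zero,
      zero_mul, add_zero, zero_add, h.nA_one, h.bOne_n] at inst
    have hm1 := iNsum _ _ (βb1 b)
    have hm2 := mulL _ _ b w2
    refine pairN _ _ ?_
    linear_combination (norm := abel1) -inst + hm1 - hm2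
  -- ρ
  have ρ : ∀ (a : A) (b : B),
      h.pN (q (h.ιA a) (h.ιB b)) + h.pN (q (h.ιB b) (h.ιA a)) = 0 := by
    intro a b
    have inst := congrArg (fun g : G => h.ιN (h.pN g))
      (Etri q hcomm (h.ιA a) (h.ιB b) (h.ιA 1))
    simp only [map_add, add_mul, mul_add, h.iN_pN_mul, h.pA_ιA, h.pA_ιB, h.pA_ιM,
      h.pB_ιA, h.pB_ιB, h.pB_ιM, h.pN_ιA, h.pN_ιB, h.pN_ιM, map_zero, mul_zero,
      zero_mul, add_zero, zero_add, h.nA_one, h.bOne_n] at inst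
    have hmK := mulR _ _ a (τ b)
    have hmL := mulL _ _ b (βa1 a)
    refine pairN _ _ ?_
    linear_combination (norm := abel1) inst - hmK + hmL
  -- assembly
  intro x hx
  have hxd : x = h.ιA (h.pA x) + h.ιM (h.pM x) + h.ιB (h.pB x) := by
    conv_lhs => rw [h.decomp x]
    rw [hx, map_zero, add_zero]
  suffices key : ∀ (a : A) (m : M) (b : B),
      h.pN (q (h.ιA a + h.ιM m + h.ιB b) (h.ιA a + h.ιM m + h.ιB b)) = 0 by
    rw [hxd]; exact key _ _ _
  intro a m b
  have expand : q (h.ιA a + h.ιM m + h.ιB b) (h.ιA a + h.ιM m + h.ιB b) =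
      q (h.ιA a) (h.ιA a) + (q (h.ιA a) (h.ιM m) + q (h.ιM m) (h.ιA a)) +
      (q (h.ιA a) (h.ιB b) + q (h.ιB b) (h.ιA a)) + q (h.ιM m) (h.ιM m) +
      (q (h.ιM m) (h.ιB b) + q (h.ιB b) (h.ιM m)) + q (h.ιB b) (h.ιB b) := by
    simp only [map_add, LinearMap.add_apply]
    abel
  rw [expand]
  simp only [map_add]
  rw [pa, μ, rb, ν a m, ρ a b, σ m b]
  simp
end

section
/- Let G = [A M; N B] be a 2-torsionfree generalized matrix algebra over a commutative ring R, let q : G × G → G be an R-bilinear map, and suppose the trace T_q(x) = q(x,x) is commuting. Then for every element x = [a 0; n b] of G whose M-entry is zero, the M-entry of T_q(x) is zero. -/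
private lemma gma_aux {G : Type*} [Ring G] (e f : G)
    (hee : e * e = e) (hef : e * f = 0) (hone : e + f = 1)
    (htf : ∀ g : G, g + g = 0 → g = 0)
    (q : G → G → G)
    (hql : ∀ y z w, q (y + z) w = q y w + q z w)
    (hqr : ∀ y z w, q y (z + w) = q y z + q y w)
    (hcomm : ∀ y, q y y * y = y * q y y)
    (x : G) (hx : e * x * f = 0) :
    e * q x x * f = 0 := by
  have hcorner : ∀ g : G, e * (e * g * f) = e * g * f := by
    intro g; rw [← mul_assoc, ← mul_assoc, hee]
  have eqM : ∀ y : G, e * y * f = 0 →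
      e * q y y * f * (y * f) = e * y * (e * q y y * f) := by
    intro y hy
    have hyf : y * f = f * (y * f) := by
      have h1 : (e + f) * (y * f) = y * f := by rw [hone, one_mul]
      rw [add_mul, ← mul_assoc, hy, zero_add] at h1
      exact h1.symm
    have hey : e * y = e * y * e := by
      have h1 : e * y * (e + f) = e * y := by rw [hone, mul_one]
      rw [mul_add, hy, add_zero] at h1
      exact h1.symm
    calc e * q y y * f * (y * f)
        = e * q y y * (f * (y * f)) := by rw [mul_assoc]
      _ = e * q y y * (y * f) := by rw [← hyf]
      _ = e * q y y * y * f := by rw [← mul_assoc]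
      _ = e * (q y y * y) * f := by rw [mul_assoc e]
      _ = e * (y * q y y) * f := by rw [hcomm y]
      _ = e * y * q y y * f := by rw [← mul_assoc e]
      _ = e * y * (q y y * f) := by rw [mul_assoc (e * y)]
      _ = e * y * e * (q y y * f) := by rw [← hey]
      _ = e * y * (e * (q y y * f)) := by rw [mul_assoc]
      _ = e * y * (e * q y y * f) := by rw [← mul_assoc e]
  have t0 : e * q e e * f = 0 := by
    have h1 := eqM e (by rw [hee]; exact hef)
    rw [hef, mul_zero, hee, hcorner] at h1
    exact h1.symm
  obtain ⟨U, hU⟩ : ∃ U : G, q x e + q e x = U := ⟨_, rfl⟩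
  have hql' : ∀ y z w, q (y - z) w = q y w - q z w := by
    intro y z w
    have h1 := hql (y - z) z w
    rw [sub_add_cancel] at h1
    exact eq_sub_of_add_eq h1.symm
  have hqr' : ∀ y z w, q y (z - w) = q y z - q y w := by
    intro y z w
    have h1 := hqr y (z - w) w
    rw [sub_add_cancel] at h1
    exact eq_sub_of_add_eq h1.symm
  have hexp1 : q (x + e) (x + e) = q x x + U + q e e := by
    rw [hql, hqr, hqr, ← hU]; abel
  have hexp2 : q (x - e) (x - e) = q x x - U + q e e := by
    rw [hql', hqr', hqr', ← hU]; abel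
  have hc1 : e * q (x + e) (x + e) * f = e * q x x * f + e * U * f := by
    rw [hexp1, mul_add, mul_add, add_mul, add_mul, t0, add_zero]
  have hc2 : e * q (x - e) (x - e) * f = e * q x x * f - e * U * f := by
    rw [hexp2, mul_add, mul_sub, add_mul, sub_mul, t0, add_zero]
  have hbf1 : (x + e) * f = x * f := by rw [add_mul, hef, add_zero]
  have hbf2 : (x - e) * f = x * f := by rw [sub_mul, hef, sub_zero]
  have hae1 : e * (x + e) = e * x + e := by rw [mul_add, hee]
  have hae2 : e * (x - e) = e * x - e := by rw [mul_sub, hee]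
  have Ep := eqM (x + e) (by rw [mul_add, hee, add_mul, hx, hef, add_zero])
  rw [hc1, hbf1, hae1] at Ep
  rw [add_mul, add_mul, mul_add, mul_add] at Ep
  simp only [hcorner] at Ep
  have Em := eqM (x - e) (by rw [mul_sub, hee, sub_mul, hx, hef, sub_zero])
  rw [hc2, hbf2, hae2] at Em
  rw [sub_mul, sub_mul, mul_sub, mul_sub] at Em
  simp only [hcorner] at Em
  have E0 := eqM x hx
  rw [E0] at Ep Em
  set μ := e * q x x * f with hμdef
  set u := e * U * f with hudef
  -- Ep : e*x*μ + u*(x*f) = (e*x*μ + e*x*u) + (μ + u)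
  -- Em : e*x*μ - u*(x*f) = (e*x*μ - e*x*u) - (μ - u)
  have h1 : u * (x * f) = ((e * x * μ + e * x * u) + (μ + u)) - e * x * μ := by
    rw [← Ep]; abel
  have h2 : u * (x * f) = e * x * μ - ((e * x * μ - e * x * u) - (μ - u)) := by
    rw [← Em]; abel
  have h3 := h1.symm.trans h2
  have h4 : u + u = (((e * x * μ + e * x * u) + (μ + u)) - e * x * μ)
      - (e * x * μ - ((e * x * μ - e * x * u) - (μ - u))) := by abel
  rw [h3, sub_self] at h4
  have hu : u = 0 := htf u h4
  rw [hu] at h1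
  simp only [zero_mul, mul_zero, add_zero] at h1
  have h6 : (e * x * μ + μ) - e * x * μ = μ := by abel
  rw [h6] at h1
  exact h1.symm

/-- Let `G = [A M; N B]` be a `2`-torsionfree generalized matrix algebra over a
commutative ring `R`, let `q : G × G → G` be an `R`-bilinear map whose trace
`T_q(x) = q(x,x)` is commuting.  Then for every `x = [a 0; n b]` in `G` whose
`M`-entry is zero, the `M`-entry of `T_q(x)` is zero. -/
theorem stmt4 (R A B M N G : Type*) [CommRing R]
    [Ring A] [Algebra R A] [Ring B] [Algebra R B]
    [AddCommGroup M] [Module R M] [AddCommGroup N] [Module R N]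
    [Ring G] [Algebra R G]
    (h : GMA R A B M N G)
    (hMN : (∃ m : M, m ≠ 0) ∨ (∃ n : N, n ≠ 0))
    (htf : ∀ g : G, g + g = 0 → g = 0)
    (q : G →ₗ[R] G →ₗ[R] G)
    (hcomm : ∀ x : G, q x x * x = x * q x x) :
    ∀ x : G, h.pM x = 0 → h.pM (q x x) = 0 := by
  intro x hx
  have hee : h.ιA 1 * h.ιA 1 = h.ιA 1 := by rw [h.mul_AA, one_mul]
  have hef : h.ιA 1 * h.ιB 1 = 0 := h.mul_AB 1 1
  have hone : h.ιA 1 + h.ιB 1 = 1 := h.one_def.symm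
  have heA : ∀ a, h.ιA 1 * h.ιA a = h.ιA a := fun a => by rw [h.mul_AA, one_mul]
  have heM : ∀ m, h.ιA 1 * h.ιM m = h.ιM m := by
    intro m
    have h1 : (h.ιA 1 + h.ιB 1) * h.ιM m = h.ιM m := by rw [hone, one_mul]
    rw [add_mul, h.mul_BM, add_zero] at h1
    exact h1
  have hMf : ∀ m, h.ιM m * h.ιB 1 = h.ιM m := by
    intro m
    have h1 : h.ιM m * (h.ιA 1 + h.ιB 1) = h.ιM m := by rw [hone, mul_one]
    rw [mul_add, h.mul_MA, zero_add] at h1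
    exact h1
  have hproj : ∀ g : G, h.ιA 1 * g * h.ιB 1 = h.ιM (h.pM g) := by
    intro g
    conv_lhs => rw [h.decomp g]
    rw [mul_add, mul_add, mul_add, heA, heM, h.mul_AN, h.mul_AB, add_zero, add_zero,
      add_mul, h.mul_AB, hMf, zero_add]
  have hx' : h.ιA 1 * x * h.ιB 1 = 0 := by rw [hproj, hx, map_zero]
  have key := gma_aux (h.ιA 1) (h.ιB 1) hee hef hone htf (fun y z => q y z)
    (by intro y z w; simp [map_add]) (by intro y z w; simp [map_add]) hcomm x hx'
  have h2 : h.ιM (h.pM (q x x)) = 0 := by rw [← hproj]; exact key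
  have h3 := congrArg h.pM h2
  rw [h.pM_ιM, map_zero] at h3
  exact h3
end

section
/- Let G = [A M; N B] and G' = [A' M'; N' B'] be generalized matrix algebras over a commutative ring R with 1/2 ∈ R, and let l : G → G' be a Lie isomorphism. Suppose that (1) every commuting trace of an arbitrary R-bilinear map on G' is proper; (2) at least one of A, B is noncommutative and at least one of A', B' is noncommutative; and (3) M' is loyal. Then l = m + n, where m : G → G' is an injective algebra homomorphism or the negative of an injective algebra anti-homomorphism, and n : G → Z(G') is an R-linear map with n([x, y]) = 0 for all x, y ∈ G. Moreover, if Z(G') = R·1, then m is surjective. -/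
/-!
Put `q x y = l (l⁻¹ x * l⁻¹ y)` and let `Z` be the center of `G'`. As `l` is a Lie map, `q x x`
commutes with `x` and `q x y - q y x = x * y - y * x`, so hypothesis (1) and polarization give
`q x y = α x y + β y x + λ(x) y + λ(y) x + γ(x, y)` with central `α = (z + 1) / 2`, `β = α - 1`.
Associativity of `q` puts `α β [y, [x, w]]` into `Z w + Z x + Z`; taking `x, w` in a
noncommutative corner and `y ∈ M'`, loyalty forces `α β = 0`, and since `Z` is a domain,
`α = 1` or `α = 0`. Accordingly `m = l ± λ ∘ l` is multiplicative, resp. the negative of an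
anti-multiplicative map, up to a central defect `δ`; associativity gives
`δ(v, w) m(u) ≡ δ(u, v) m(w)` modulo `Z`, so `δ(v, w)²` annihilates a commutator on which `Z`
acts faithfully, and `δ = 0`.
-/

section CenterScalars

variable {G : Type*} [Ring G]

theorem commutator_add_of_mem_center (a b : G) {c d : G} (hc : c ∈ Subring.center G)
    (hd : d ∈ Subring.center G) : (a + c) * (b + d) - (b + d) * (a + c) = a * b - b * a := by
  rw [Subring.mem_center_iff] at hc hd
  simp only [mul_add, add_mul, hc, hd a]
  abel

def HasFaithfulCommutator (G : Type*) [Ring G] : Prop :=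
  ∃ g₁ g₂ : G, ∀ c : Subring.center G, c • (g₁ * g₂ - g₂ * g₁) = 0 → c = 0

namespace HasFaithfulCommutator

theorem eq_zero_of_forall_smul_mem_center (hG : HasFaithfulCommutator G) {c : Subring.center G}
    (hc : ∀ g : G, c • g ∈ Subring.center G) : c = 0 := by
  obtain ⟨g₁, g₂, hg⟩ := hG
  refine hg c ?_
  rw [smul_sub, ← smul_mul_assoc, ← mul_smul_comm, Subring.mem_center_iff.1 (hc g₁) g₂, sub_self]

theorem eq_zero_of_forall_smul_eq [NoZeroDivisors (Subring.center G)]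
    (hG : HasFaithfulCommutator G) (a : G)
    {c : Subring.center G} (hc : ∀ g : G, ∃ ζ ξ : Subring.center G, c • g = ζ • a + ξ • 1) :
    c = 0 := by
  obtain ⟨g₁, g₂, hg⟩ := hG
  obtain ⟨ζ₁, ξ₁, h₁⟩ := hc g₁
  obtain ⟨ζ₂, ξ₂, h₂⟩ := hc g₂
  refine mul_self_eq_zero.1 (hg _ ?_)
  calc (c * c) • (g₁ * g₂ - g₂ * g₁) = (c • g₁) * (c • g₂) - (c • g₂) * (c • g₁) := by
        simp only [smul_mul_assoc, mul_smul_comm, smul_smul, smul_sub]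
    _ = 0 := by
        -- both factors lie in the commutative ring generated by `a` over the center
        rw [h₁, h₂]
        simp only [add_mul, mul_add, smul_mul_assoc, mul_smul_comm, one_mul, mul_one]
        module

theorem defect_eq_zero [NoZeroDivisors (Subring.center G)] (hG : HasFaithfulCommutator G)
    {X : Type*} (f : X → G)
    (hf : ∀ g, ∃ u, g - f u ∈ Subring.center G) (δ : X → X → G)
    (hδ : ∀ u v, δ u v ∈ Subring.center G)
    (hrel : ∀ u v w, δ v w * f u - δ u v * f w ∈ Subring.center G) (v w : X) : δ v w = 0 := by
  have := hG.eq_zero_of_forall_smul_eq (f w) (c := ⟨δ v w, hδ v w⟩) fun g => by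
    obtain ⟨u, hu⟩ := hf g
    refine ⟨⟨δ u v, hδ u v⟩,
      ⟨δ v w * f u - δ u v * f w, hrel u v w⟩ + ⟨δ v w, hδ v w⟩ * ⟨g - f u, hu⟩, ?_⟩
    simp only [Subring.smul_def, smul_eq_mul, Subring.coe_add, Subring.coe_mul, mul_one]
    noncomm_ring
  simpa using congrArg Subtype.val this

end HasFaithfulCommutator

theorem exists_smul_commutator_commutator_eq (q : G → G → G) (α β : Subring.center G)
    (lam : G → G) (hlam : ∀ x, lam x ∈ Subring.center G) (gam : G → G → G)
    (hgam : ∀ x y, gam x y ∈ Subring.center G)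
    (hq : ∀ x y, q x y = α • (x * y) + β • (y * x) + lam x * y + lam y * x + gam x y)
    (hassoc : ∀ x y w, q (q x y) w = q x (q y w)) (x y w : G) :
    ∃ θ₁ θ₂ θ₃ : Subring.center G, (α * β) • (y * (x * w - w * x) - (x * w - w * x) * y) =
      θ₁ • w + θ₂ • x + θ₃ • (1 : G) := by
  set lamC : G → Subring.center G := fun x => ⟨lam x, hlam x⟩
  set gamC : G → G → Subring.center G := fun x y => ⟨gam x y, hgam x y⟩
  have hq' : ∀ x y, q x y = α • (x * y) + β • (y * x) + lamC x • y + lamC y • x + gamC x y • 1 := by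
    simp [hq, lamC, gamC, Subring.smul_def]
  refine ⟨lamC x * lamC y - (α + β) * gamC x y - lamC (q x y),
    (α + β) * gamC y w + lamC (q y w) - lamC w * lamC y,
    lamC x * gamC y w + gamC x (q y w) - lamC w * gamC x y - gamC (q x y) w, ?_⟩
  have key := hassoc x y w
  rw [hq' (q x y) w, hq' x (q y w)] at key
  rw [hq' x y, hq' y w] at key ⊢
  simp only [mul_add, add_mul, mul_sub, sub_mul, smul_mul_assoc, mul_smul_comm, one_mul, mul_one,
    smul_add, smul_smul, mul_assoc] at key ⊢
  linear_combination (norm := module) key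

end CenterScalars

section BilinearForm

variable {R G : Type*} [CommRing R] [Ring G] [Algebra R G]

theorem two_smul_bilin_eq_of_diag (q : G →ₗ[R] G →ₗ[R] G)
    (hskew : ∀ x y, q x y - q y x = x * y - y * x) (z : G) (μ : G →ₗ[R] G)
    (p : G →ₗ[R] G →ₗ[R] G) (hdiag : ∀ x, q x x = z * x ^ 2 + μ x * x + p x x) (x y : G) :
    (2 : R) • q x y = (z + 1) * (x * y) + (z - 1) * (y * x) + μ x * y + μ y * x +
      (p x y + p y x) := by
  have hpolar := hdiag (x + y)
  simp only [map_add, LinearMap.add_apply, sq, mul_add, add_mul] at hpolar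
  rw [hdiag x, hdiag y] at hpolar
  simp only [sq, add_mul, sub_mul, one_mul] at hpolar ⊢
  linear_combination (norm := module) hpolar + hskew x y

theorem exists_bilin_eq_of_diag [Invertible (2 : R)] (q : G →ₗ[R] G →ₗ[R] G)
    (hskew : ∀ x y, q x y - q y x = x * y - y * x) {z : G} (hz : z ∈ Subring.center G)
    {μ : G →ₗ[R] G} (hμ : ∀ x, μ x ∈ Subring.center G) {p : G →ₗ[R] G →ₗ[R] G}
    (hp : ∀ x y, p x y ∈ Subring.center G) (hdiag : ∀ x, q x x = z * x ^ 2 + μ x * x + p x x) :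
    ∃ α β : Subring.center G, α = β + 1 ∧
      ∃ lam : G →ₗ[R] G, (∀ x, lam x ∈ Subring.center G) ∧
      ∃ gam : G → G → G, (∀ x y, gam x y ∈ Subring.center G) ∧
        ∀ x y, q x y = α • (x * y) + β • (y * x) + lam x * y + lam y * x + gam x y := by
  have half_mem {c : G} (hc : c ∈ Subring.center G) : (⅟2 : R) • c ∈ Subring.center G :=
    Subalgebra.smul_mem (Subalgebra.center R G) hc _
  refine ⟨⟨(⅟2 : R) • (z + 1), half_mem (add_mem hz (one_mem _))⟩,
    ⟨(⅟2 : R) • (z - 1), half_mem (sub_mem hz (one_mem _))⟩, ?_, (⅟2 : R) • μ,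
    fun x => half_mem (hμ x), fun x y => (⅟2 : R) • (p x y + p y x),
    fun x y => half_mem (add_mem (hp x y) (hp y x)), fun x y => ?_⟩
  · ext
    simp only [Subring.coe_add, OneMemClass.coe_one]
    linear_combination (norm := module) (invOf_mul_self (2 : R)) • (1 : G)
  · rw [← invOf_smul_smul (2 : R) (q x y), two_smul_bilin_eq_of_diag q hskew z μ p hdiag]
    simp only [Subring.smul_def, smul_eq_mul, LinearMap.smul_apply, smul_mul_assoc]
    module

end BilinearForm

section LieIso

variable {R G G' : Type*} [CommRing R] [Ring G] [Algebra R G] [Ring G'] [Algebra R G']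

def transferMul (l : G ≃ₗ[R] G') : G' →ₗ[R] G' →ₗ[R] G' :=
  ((LinearMap.mul R G).compl₁₂ l.symm.toLinearMap l.symm.toLinearMap).compr₂ l.toLinearMap

theorem transferMul_apply (l : G ≃ₗ[R] G') (x y : G') :
    transferMul l x y = l (l.symm x * l.symm y) := rfl

theorem transferMul_assoc (l : G ≃ₗ[R] G') (x y w : G') :
    transferMul l (transferMul l x y) w = transferMul l x (transferMul l y w) := by
  simp [transferMul_apply, mul_assoc]

theorem transferMul_map_map (l : G ≃ₗ[R] G') (u v : G) :
    transferMul l (l u) (l v) = l (u * v) := by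
  simp [transferMul_apply]

theorem transferMul_sub_swap {l : G ≃ₗ[R] G'}
    (hl : ∀ x y, l (x * y - y * x) = l x * l y - l y * l x) (x y : G') :
    transferMul l x y - transferMul l y x = x * y - y * x := by
  simpa [transferMul_apply] using hl (l.symm x) (l.symm y)

theorem transferMul_self_mul_comm {l : G ≃ₗ[R] G'}
    (hl : ∀ x y, l (x * y - y * x) = l x * l y - l y * l x) (x : G') :
    transferMul l x x * x = x * transferMul l x x := by
  have := hl (l.symm x * l.symm x) (l.symm x)
  rw [mul_assoc, sub_self, map_zero, l.apply_symm_apply] at this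
  exact sub_eq_zero.1 this.symm

theorem map_mem_center_iff_of_lie {l : G ≃ₗ[R] G'}
    (hl : ∀ x y, l (x * y - y * x) = l x * l y - l y * l x) {x : G} :
    l x ∈ Subring.center G' ↔ x ∈ Subring.center G := by
  simp only [Subring.mem_center_iff]
  refine ⟨fun hx g => l.injective ?_, fun hx g => ?_⟩
  · rw [← sub_eq_zero, ← map_sub, hl, hx, sub_self]
  · rw [← l.apply_symm_apply g, ← sub_eq_zero, ← hl, hx, sub_self, map_zero]

end LieIso

section Decomposition

variable {R G G' : Type*} [CommRing R] [Ring G] [Algebra R G] [Ring G'] [Algebra R G']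

theorem exists_mul_of_prod_sub_mem_center [NoZeroDivisors (Subring.center G')]
    (hG' : HasFaithfulCommutator G') (l : G ≃ₗ[R] G') {lam : G' →ₗ[R] G'}
    (hlam : ∀ x, lam x ∈ Subring.center G')
    (hprod : ∀ u v, l (u * v) - (l u * l v + lam (l u) * l v + lam (l v) * l u) ∈
      Subring.center G') :
    ∃ m : G →ₗ[R] G', (∀ x, l x - m x ∈ Subring.center G') ∧
      ∀ x y, m (x * y) = m x * m y := by
  set m : G →ₗ[R] G' := l.toLinearMap + lam ∘ₗ l.toLinearMap
  have hm (x : G) : m x = l x + lam (l x) := rfl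
  have hcover (g : G') : ∃ u, g - m u ∈ Subring.center G' :=
    ⟨l.symm g, by simpa [hm] using neg_mem (hlam g)⟩
  have hδ (u v : G) : m (u * v) - m u * m v ∈ Subring.center G' := by
    convert add_mem (hprod u v) (sub_mem (hlam (l (u * v))) (mul_mem (hlam (l u)) (hlam (l v))))
      using 1
    rw [hm, hm, hm]
    simp only [mul_add, add_mul, Subring.mem_center_iff.1 (hlam (l v)) (l u)]
    noncomm_ring
  -- compare the two expansions of `m (u * v * w)`
  have hrel (u v w : G) : (m (v * w) - m v * m w) * m u - (m (u * v) - m u * m v) * m w ∈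
      Subring.center G' := by
    convert sub_mem (hδ (u * v) w) (hδ u (v * w)) using 1
    rw [mul_assoc, ← Subring.mem_center_iff.1 (hδ v w) (m u)]
    noncomm_ring
  exact ⟨m, fun x => by simpa [hm] using neg_mem (hlam (l x)),
    fun x y => sub_eq_zero.1 (hG'.defect_eq_zero m hcover _ hδ hrel x y)⟩

theorem exists_antimul_of_prod_sub_mem_center [NoZeroDivisors (Subring.center G')]
    (hG' : HasFaithfulCommutator G') (l : G ≃ₗ[R] G') {lam : G' →ₗ[R] G'}
    (hlam : ∀ x, lam x ∈ Subring.center G')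
    (hprod : ∀ u v, l (u * v) - (-(l v * l u) + lam (l u) * l v + lam (l v) * l u) ∈
      Subring.center G') :
    ∃ m : G →ₗ[R] G', (∀ x, l x - m x ∈ Subring.center G') ∧
      ∀ x y, m (x * y) = -(m y * m x) := by
  set m : G →ₗ[R] G' := l.toLinearMap - lam ∘ₗ l.toLinearMap
  have hm (x : G) : m x = l x - lam (l x) := rfl
  have hcover (g : G') : ∃ u, g - m u ∈ Subring.center G' :=
    ⟨l.symm g, by simpa [hm] using hlam g⟩
  have hδ (u v : G) : m (u * v) + m v * m u ∈ Subring.center G' := by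
    convert add_mem (hprod u v) (sub_mem (mul_mem (hlam (l v)) (hlam (l u))) (hlam (l (u * v))))
      using 1
    rw [hm, hm, hm]
    simp only [mul_sub, sub_mul, Subring.mem_center_iff.1 (hlam (l u)) (l v)]
    noncomm_ring
  have hrel (u v w : G) : (m (v * w) + m w * m v) * m u - (m (u * v) + m v * m u) * m w ∈
      Subring.center G' := by
    convert sub_mem (hδ u (v * w)) (hδ (u * v) w) using 1
    rw [mul_assoc, ← Subring.mem_center_iff.1 (hδ u v) (m w)]
    noncomm_ring
  exact ⟨m, fun x => by simpa [hm] using hlam (l x),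
    fun x y => eq_neg_of_add_eq_zero_left (hG'.defect_eq_zero m hcover _ hδ hrel x y)⟩

theorem exists_mul_or_antimul_of_prod_eq [NoZeroDivisors (Subring.center G')]
    (hG' : HasFaithfulCommutator G') (l : G ≃ₗ[R] G') {α β : Subring.center G'}
    (hαβ : α = β + 1) (hαβ0 : α * β = 0) {lam : G' →ₗ[R] G'}
    (hlam : ∀ x, lam x ∈ Subring.center G') {gam : G' → G' → G'}
    (hgam : ∀ x y, gam x y ∈ Subring.center G')
    (hprod : ∀ u v, l (u * v) = α • (l u * l v) + β • (l v * l u) + lam (l u) * l v +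
      lam (l v) * l u + gam (l u) (l v)) :
    ∃ m : G →ₗ[R] G', (∀ x, l x - m x ∈ Subring.center G') ∧
      ((∀ x y, m (x * y) = m x * m y) ∨ (∀ x y, m (x * y) = -(m y * m x))) := by
  have hα : α * (α - 1) = 0 := by rw [hαβ, add_sub_cancel_right, ← hαβ, hαβ0]
  rcases mul_eq_zero.1 hα with hα | hα
  · have hβ : β = -1 := eq_neg_of_add_eq_zero_left (hα ▸ hαβ).symm
    obtain ⟨m, hlm, hmul⟩ := exists_antimul_of_prod_sub_mem_center hG' l hlam fun u v => by
      simpa [hprod, hα, hβ] using hgam (l u) (l v)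
    exact ⟨m, hlm, Or.inr hmul⟩
  · have hβ : β = 0 := by simpa [sub_eq_zero.1 hα] using hαβ
    obtain ⟨m, hlm, hmul⟩ := exists_mul_of_prod_sub_mem_center hG' l hlam fun u v => by
      simpa [hprod, sub_eq_zero.1 hα, hβ] using hgam (l u) (l v)
    exact ⟨m, hlm, Or.inl hmul⟩

end Decomposition

section Assembly

variable {R G G' : Type*} [CommRing R] [Ring G] [Algebra R G] [Ring G'] [Algebra R G']
  {l : G ≃ₗ[R] G'} {m : G →ₗ[R] G'}

theorem map_commutator_of_mul_or_antimul
    (hmul : (∀ x y, m (x * y) = m x * m y) ∨ (∀ x y, m (x * y) = -(m y * m x))) (x y : G) :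
    m (x * y - y * x) = m x * m y - m y * m x := by
  rcases hmul with hmul | hmul
  · rw [map_sub, hmul, hmul]
  · rw [map_sub, hmul, hmul, neg_sub_neg]

theorem sub_map_commutator_eq_zero (hl : ∀ x y, l (x * y - y * x) = l x * l y - l y * l x)
    (hlm : ∀ x, l x - m x ∈ Subring.center G')
    (hmul : (∀ x y, m (x * y) = m x * m y) ∨ (∀ x y, m (x * y) = -(m y * m x))) (x y : G) :
    l (x * y - y * x) - m (x * y - y * x) = 0 := by
  rw [hl, map_commutator_of_mul_or_antimul hmul, ← commutator_add_of_mem_center (m x) (m y) (hlm x)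
    (hlm y), add_sub_cancel, add_sub_cancel, sub_self]

theorem injective_of_mul_or_antimul (hl : ∀ x y, l (x * y - y * x) = l x * l y - l y * l x)
    (hG : ∀ u : G, (∀ v, u * v ∈ Subring.center G) → u = 0)
    (hlm : ∀ x, l x - m x ∈ Subring.center G')
    (hmul : (∀ x y, m (x * y) = m x * m y) ∨ (∀ x y, m (x * y) = -(m y * m x))) :
    Function.Injective m := by
  refine (injective_iff_map_eq_zero m).2 fun u hu =>
    hG u fun v => (map_mem_center_iff_of_lie hl).1 ?_
  have huv : m (u * v) = 0 := by rcases hmul with hmul | hmul <;> simp [hmul, hu]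
  simpa [huv] using hlm (u * v)

theorem exists_map_eq_one (hG' : HasFaithfulCommutator G')
    (hl : ∀ x y, l (x * y - y * x) = l x * l y - l y * l x)
    (hlm : ∀ x, l x - m x ∈ Subring.center G')
    (hmul : (∀ x y, m (x * y) = m x * m y) ∨ (∀ x y, m (x * y) = -(m y * m x))) :
    ∃ e, m e = 1 := by
  have hm1 : m 1 ∈ Subring.center G' := by
    simpa using sub_mem ((map_mem_center_iff_of_lie hl).2 (one_mem _)) (hlm 1)
  have eq_zero {c : G'} (hc : c ∈ Subring.center G') (hcm : ∀ u, c * m u = 0) : c = 0 := by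
    have := hG'.eq_zero_of_forall_smul_mem_center (c := ⟨c, hc⟩) fun g => by
      have hcg : c * g = c * (l (l.symm g) - m (l.symm g)) := by
        rw [mul_sub, hcm, sub_zero, l.apply_symm_apply]
      simpa [Subring.smul_def, hcg] using mul_mem hc (hlm (l.symm g))
    simpa using congrArg Subtype.val this
  rcases hmul with hmul | hmul
  · refine ⟨1, (sub_eq_zero.1 (eq_zero (sub_mem (one_mem _) hm1) fun u => ?_)).symm⟩
    rw [sub_mul, one_mul, ← hmul, one_mul, sub_self]
  · refine ⟨-1, ?_⟩
    rw [map_neg, neg_eq_iff_add_eq_zero, add_comm]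
    refine eq_zero (add_mem (one_mem _) hm1) fun u => ?_
    rw [add_mul, one_mul, ← neg_neg (m 1 * m u), ← hmul, mul_one, add_neg_cancel]

theorem surjective_of_center_eq_range (hlm : ∀ x, l x - m x ∈ Subring.center G') {e : G}
    (he : m e = 1) (hZ : (Subring.center G' : Set G') = Set.range (algebraMap R G')) :
    Function.Surjective m := fun g => by
  obtain ⟨r, hr⟩ : g - m (l.symm g) ∈ Set.range (algebraMap R G') := by
    simpa [← hZ] using hlm (l.symm g)
  exact ⟨l.symm g + r • e, by
    rw [map_add, map_smul, he, ← Algebra.algebraMap_eq_smul_one, hr, add_sub_cancel]⟩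

end Assembly

namespace GMA

variable {R A B M N G : Type*} [CommRing R] [Ring A] [Algebra R A] [Ring B] [Algebra R B]
  [AddCommGroup M] [Module R M] [AddCommGroup N] [Module R N] [Ring G] [Algebra R G]
  (h : GMA R A B M N G)

theorem ιA_one_mul_ιM_s13 (m : M) : h.ιA 1 * h.ιM m = h.ιM m := by
  simpa [add_mul, h.mul_BM] using congrArg (· * h.ιM m) h.one_def.symm

theorem ιM_mul_ιB_one (m : M) : h.ιM m * h.ιB 1 = h.ιM m := by
  simpa [mul_add, h.mul_MA] using congrArg (h.ιM m * ·) h.one_def.symm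

theorem ιB_one_mul_ιN (n : N) : h.ιB 1 * h.ιN n = h.ιN n := by
  simpa [add_mul, h.mul_AN] using congrArg (· * h.ιN n) h.one_def.symm

theorem ιA_one_mul_mul_ιA_one (g : G) : h.ιA 1 * g * h.ιA 1 = h.ιA (h.pA g) := by
  conv_lhs => rw [h.decomp g]
  simp [mul_add, add_mul, h.mul_AA, h.ιA_one_mul_ιM_s13, h.mul_MA, h.mul_AN, h.mul_AB]

theorem ιB_one_mul_mul_ιB_one (g : G) : h.ιB 1 * g * h.ιB 1 = h.ιB (h.pB g) := by
  conv_lhs => rw [h.decomp g]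
  simp [mul_add, add_mul, h.mul_BB, h.ιB_one_mul_ιN, h.mul_NB, h.mul_BM, h.mul_BA]

theorem ιA_one_mul_mul_ιB_one (g : G) : h.ιA 1 * g * h.ιB 1 = h.ιM (h.pM g) := by
  conv_lhs => rw [h.decomp g]
  simp [mul_add, add_mul, h.mul_AA, h.mul_AB, h.ιA_one_mul_ιM_s13, h.ιM_mul_ιB_one, h.mul_AN]

theorem pM_one : h.pM 1 = 0 := by
  rw [h.one_def, map_add, h.pM_ιA, h.pM_ιB, add_zero]

theorem ιM_pM_ιA_mul_ιM (a : A) (m : M) : h.ιM (h.pM (h.ιA a * h.ιM m)) = h.ιA a * h.ιM m := by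
  obtain ⟨k, hk⟩ := h.mul_AM a m
  rw [← hk, h.pM_ιM]

theorem ιM_pM_ιM_mul_ιB (m : M) (b : B) : h.ιM (h.pM (h.ιM m * h.ιB b)) = h.ιM m * h.ιB b := by
  obtain ⟨k, hk⟩ := h.mul_MB m b
  rw [← hk, h.pM_ιM]

variable {h}

theorem mul_ιA_one_of_mem_center {z : G} (hz : z ∈ Subring.center G) :
    z * h.ιA 1 = h.ιA (h.pA z) := by
  rw [← h.ιA_one_mul_mul_ιA_one, Subring.mem_center_iff.1 hz, mul_assoc, h.mul_AA, mul_one]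

theorem mul_ιB_one_of_mem_center {z : G} (hz : z ∈ Subring.center G) :
    z * h.ιB 1 = h.ιB (h.pB z) := by
  rw [← h.ιB_one_mul_mul_ιB_one, Subring.mem_center_iff.1 hz, mul_assoc, h.mul_BB, mul_one]

theorem eq_zero_of_mem_center_of_mul_ιB_one {z : G} (hz : z ∈ Subring.center G)
    (hzB : z * h.ιB 1 = 0) : z = 0 := by
  have hzA : z = h.ιA (h.pA z) := by
    rw [← mul_ιA_one_of_mem_center hz]
    simpa [mul_add, hzB] using congrArg (z * ·) h.one_def
  have : h.pA z = 0 := h.faithful_left _ fun m => by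
    rw [← hzA, ← h.ιM_mul_ιB_one, ← mul_assoc, ← Subring.mem_center_iff.1 hz, mul_assoc, hzB,
      mul_zero]
  rw [hzA, this, map_zero]

theorem eq_zero_of_mem_center_of_mul_ιA_one {z : G} (hz : z ∈ Subring.center G)
    (hzA : z * h.ιA 1 = 0) : z = 0 := by
  have hzB : z = h.ιB (h.pB z) := by
    rw [← mul_ιB_one_of_mem_center hz]
    simpa [mul_add, hzA] using congrArg (z * ·) h.one_def
  have : h.pB z = 0 := h.faithful_right _ fun m => by
    rw [← hzB, Subring.mem_center_iff.1 hz, ← h.ιA_one_mul_ιM_s13, ← mul_assoc, hzA, zero_mul]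
  rw [hzB, this, map_zero]

theorem eq_zero_of_forall_mul_mem_center (h : GMA R A B M N G) {u : G}
    (hu : ∀ v, u * v ∈ Subring.center G) : u = 0 := by
  have hu1 : u ∈ Subring.center G := by simpa using hu 1
  have huM (m : M) : u * h.ιM m = 0 :=
    calc u * h.ιM m = u * (h.ιA 1 * h.ιM m * h.ιB 1) := by
          rw [h.ιA_one_mul_ιM_s13, h.ιM_mul_ιB_one]
      _ = h.ιA 1 * (u * h.ιM m) * h.ιB 1 := by
          rw [← mul_assoc, ← mul_assoc, ← Subring.mem_center_iff.1 hu1, mul_assoc (h.ιA 1)]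
      _ = u * h.ιM m * (h.ιA 1 * h.ιB 1) := by
          rw [Subring.mem_center_iff.1 (hu _), mul_assoc]
      _ = 0 := by rw [h.mul_AB, mul_zero]
  have hpA : h.pA u = 0 := h.faithful_left _ fun m => by
    rw [← mul_ιA_one_of_mem_center hu1, mul_assoc, h.ιA_one_mul_ιM_s13, huM]
  refine eq_zero_of_mem_center_of_mul_ιA_one (h := h) hu1 ?_
  rw [mul_ιA_one_of_mem_center hu1, hpA, map_zero]

variable (h) in
def IsLoyal : Prop :=
  ∀ (a : A) (b : B), (∀ m : M, h.ιA a * h.ιM m * h.ιB b = 0) → a = 0 ∨ b = 0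

namespace IsLoyal

theorem eq_zero_of_smul_ιA_mul_ιM (hl : h.IsLoyal) {c : Subring.center G} (hc : c ≠ 0) {a : A}
    (H : ∀ m, c • (h.ιA a * h.ιM m) = 0) : a = 0 := by
  refine (hl a (h.pB c) fun m => ?_).resolve_right fun hb => hc ?_
  · have := H m
    rw [Subring.smul_def, smul_eq_mul] at this
    rw [← mul_ιB_one_of_mem_center c.2, ← mul_assoc, Subring.mem_center_iff.1 c.2, this,
      zero_mul]
  · refine ZeroMemClass.coe_eq_zero.1 (eq_zero_of_mem_center_of_mul_ιB_one (h := h) c.2 ?_)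
    rw [mul_ιB_one_of_mem_center c.2, hb, map_zero]

theorem eq_zero_of_smul_ιM_mul_ιB (hl : h.IsLoyal) {c : Subring.center G} (hc : c ≠ 0) {b : B}
    (H : ∀ m, c • (h.ιM m * h.ιB b) = 0) : b = 0 := by
  refine (hl (h.pA c) b fun m => ?_).resolve_left fun ha => hc ?_
  · have := H m
    rw [Subring.smul_def, smul_eq_mul] at this
    rw [← mul_ιA_one_of_mem_center c.2, mul_assoc (c : G), h.ιA_one_mul_ιM_s13, mul_assoc, this]
  · refine ZeroMemClass.coe_eq_zero.1 (eq_zero_of_mem_center_of_mul_ιA_one (h := h) c.2 ?_)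
    rw [mul_ιA_one_of_mem_center c.2, ha, map_zero]

theorem noZeroDivisors_center (hl : h.IsLoyal) : NoZeroDivisors (Subring.center G) where
  eq_zero_or_eq_zero_of_mul_eq_zero {c d} hcd := or_iff_not_imp_left.2 fun hc => by
    have hpA : h.pA d = 0 := hl.eq_zero_of_smul_ιA_mul_ιM hc fun m => by
      rw [Subring.smul_def, smul_eq_mul, ← mul_ιA_one_of_mem_center d.2, ← mul_assoc, ← mul_assoc,
        ← Subring.coe_mul, hcd, ZeroMemClass.coe_zero, zero_mul, zero_mul]
    refine ZeroMemClass.coe_eq_zero.1 (eq_zero_of_mem_center_of_mul_ιA_one (h := h) d.2 ?_)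
    rw [mul_ιA_one_of_mem_center d.2, hpA, map_zero]

theorem hasFaithfulCommutator (hl : h.IsLoyal)
    (hnc : (∃ a a' : A, a * a' ≠ a' * a) ∨ (∃ b b' : B, b * b' ≠ b' * b)) :
    HasFaithfulCommutator G := by
  rcases hnc with ⟨a, a', hne⟩ | ⟨b, b', hne⟩
  · refine ⟨h.ιA a, h.ιA a', fun c hc => by_contra fun hc0 =>
      hne (sub_eq_zero.1 (hl.eq_zero_of_smul_ιA_mul_ιM hc0 fun m => ?_))⟩
    rw [map_sub, ← h.mul_AA, ← h.mul_AA, ← smul_mul_assoc, hc, zero_mul]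
  · refine ⟨h.ιB b, h.ιB b', fun c hc => by_contra fun hc0 =>
      hne (sub_eq_zero.1 (hl.eq_zero_of_smul_ιM_mul_ιB hc0 fun m => ?_))⟩
    rw [map_sub, ← h.mul_BB, ← h.mul_BB, ← mul_smul_comm, hc, mul_zero]

theorem eq_zero_of_smul_commutator_commutator (hl : h.IsLoyal)
    (hnc : (∃ a a' : A, a * a' ≠ a' * a) ∨ (∃ b b' : B, b * b' ≠ b' * b))
    {c : Subring.center G} (H : ∀ x y w : G, ∃ θ₁ θ₂ θ₃ : Subring.center G,
      c • (y * (x * w - w * x) - (x * w - w * x) * y) = θ₁ • w + θ₂ • x + θ₃ • (1 : G)) :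
    c = 0 := by
  by_contra hc
  -- `ιA 1 * _ * ιB 1` extracts the `M`-component, which vanishes on `Z w + Z x + Z` for diagonal
  -- `x` and `w`
  have hsand {x y w : G} {θ₁ θ₂ θ₃ : Subring.center G}
      (hθ : c • y = θ₁ • w + θ₂ • x + θ₃ • (1 : G)) (hx : h.pM x = 0) (hw : h.pM w = 0) :
      c • h.ιM (h.pM y) = 0 := by
    have := congrArg (fun g => h.ιA 1 * g * h.ιB 1) hθ
    simpa [mul_add, add_mul, mul_smul_comm, smul_mul_assoc, h.ιA_one_mul_mul_ιB_one, hx, hw,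
      h.pM_one, h.mul_AB] using this
  rcases hnc with ⟨a, a', hne⟩ | ⟨b, b', hne⟩
  · refine hne (sub_eq_zero.1 (hl.eq_zero_of_smul_ιA_mul_ιM hc fun m => ?_))
    obtain ⟨θ₁, θ₂, θ₃, hθ⟩ := H (h.ιA a) (h.ιM m) (h.ιA a')
    rw [h.mul_AA, h.mul_AA, ← map_sub, h.mul_MA, zero_sub] at hθ
    have := hsand hθ (h.pM_ιA a) (h.pM_ιA a')
    rwa [map_neg, map_neg, h.ιM_pM_ιA_mul_ιM, smul_neg, neg_eq_zero] at this
  · refine hne (sub_eq_zero.1 (hl.eq_zero_of_smul_ιM_mul_ιB hc fun m => ?_))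
    obtain ⟨θ₁, θ₂, θ₃, hθ⟩ := H (h.ιB b) (h.ιM m) (h.ιB b')
    rw [h.mul_BB, h.mul_BB, ← map_sub, h.mul_BM, sub_zero] at hθ
    have := hsand hθ (h.pM_ιB b) (h.pM_ιB b')
    rwa [h.ιM_pM_ιM_mul_ιB] at this

end IsLoyal

end GMA

theorem stmt13_general (R A B M N G A' B' M' N' G' : Type*) [CommRing R]
    [Invertible (2 : R)]
    [Ring A] [Algebra R A] [Ring B] [Algebra R B]
    [AddCommGroup M] [Module R M] [AddCommGroup N] [Module R N]
    [Ring G] [Algebra R G]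
    [Ring A'] [Algebra R A'] [Ring B'] [Algebra R B']
    [AddCommGroup M'] [Module R M'] [AddCommGroup N'] [Module R N']
    [Ring G'] [Algebra R G']
    (h : GMA R A B M N G) (h' : GMA R A' B' M' N' G')
    (l : G ≃ₗ[R] G')
    (hLie : ∀ x y : G, l (x * y - y * x) = l x * l y - l y * l x)
    (h1 : ∀ q : G' →ₗ[R] G' →ₗ[R] G', (∀ x : G', q x x * x = x * q x x) →
            ∃ z ∈ Subring.center G', ∃ μ : G' →ₗ[R] G',
              (∀ x, μ x ∈ Subring.center G') ∧
              ∃ p : G' →ₗ[R] G' →ₗ[R] G', (∀ x y, p x y ∈ Subring.center G') ∧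
                ∀ x : G', q x x = z * x ^ 2 + μ x * x + p x x)
    (h2' : (∃ a a' : A', a * a' ≠ a' * a) ∨ (∃ b b' : B', b * b' ≠ b' * b))
    (h3 : ∀ (a : A') (b : B'),
            (∀ m : M', h'.ιA a * h'.ιM m * h'.ιB b = 0) → a = 0 ∨ b = 0) :
    ∃ m : G →ₗ[R] G', ∃ nm : G →ₗ[R] G',
      (∀ x : G, l x = m x + nm x) ∧
      Function.Injective m ∧
      ((∀ x y : G, m (x * y) = m x * m y) ∨ (∀ x y : G, m (x * y) = -(m y * m x))) ∧
      (∀ x : G, nm x ∈ Subring.center G') ∧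
      (∀ x y : G, nm (x * y - y * x) = 0) ∧
      ((Subring.center G' : Set G') = Set.range (algebraMap R G') →
        Function.Surjective m) := by
  have hloyal : h'.IsLoyal := h3
  have := hloyal.noZeroDivisors_center
  have hG' := hloyal.hasFaithfulCommutator h2'
  obtain ⟨z, hz, μ, hμ, p, hp, hdiag⟩ := h1 (transferMul l) (transferMul_self_mul_comm hLie)
  obtain ⟨α, β, hαβ, lam, hlam, gam, hgam, hq⟩ :=
    exists_bilin_eq_of_diag (transferMul l) (transferMul_sub_swap hLie) hz hμ hp hdiag
  have hαβ0 : α * β = 0 := hloyal.eq_zero_of_smul_commutator_commutator h2'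
    (exists_smul_commutator_commutator_eq _ α β lam hlam gam hgam hq (transferMul_assoc l))
  obtain ⟨m, hlm, hmul⟩ := exists_mul_or_antimul_of_prod_eq hG' l hαβ hαβ0 hlam hgam
    fun u v => by rw [← transferMul_map_map, hq]
  obtain ⟨e, he⟩ := exists_map_eq_one hG' hLie hlm hmul
  exact ⟨m, l.toLinearMap - m, fun x => by simp,
    injective_of_mul_or_antimul hLie (fun _ => h.eq_zero_of_forall_mul_mem_center) hlm hmul, hmul,
    hlm, sub_map_commutator_eq_zero hLie hlm hmul, surjective_of_center_eq_range hlm he⟩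

/-- **Proposition 4.2.**  Let `G = [A M; N B]` and `G' = [A' M'; N' B']` be
generalized matrix algebras over a commutative ring `R` with `1/2 ∈ R` and let
`l : G → G'` be a Lie isomorphism.  If
(1) every commuting trace of an arbitrary `R`-bilinear map on `G'` is proper,
(2) at least one of `A`, `B` and at least one of `A'`, `B'` is noncommutative, and
(3) `M'` is loyal,
then `l = m + n`, where `m : G → G'` is an injective homomorphism or the negative of
an injective anti-homomorphism and `n : G → Z(G')` is a linear map vanishing on each
commutator.  Moreover, if `G'` is central over `R`, then `m` is surjective. -/
theorem stmt13 (R A B M N G A' B' M' N' G' : Type*) [CommRing R]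
    [Invertible (2 : R)]
    [Ring A] [Algebra R A] [Ring B] [Algebra R B]
    [AddCommGroup M] [Module R M] [AddCommGroup N] [Module R N]
    [Ring G] [Algebra R G]
    [Ring A'] [Algebra R A'] [Ring B'] [Algebra R B']
    [AddCommGroup M'] [Module R M'] [AddCommGroup N'] [Module R N']
    [Ring G'] [Algebra R G']
    (h : GMA R A B M N G) (h' : GMA R A' B' M' N' G')
    (hMN : (∃ m : M, m ≠ 0) ∨ (∃ n : N, n ≠ 0))
    (hMN' : (∃ m : M', m ≠ 0) ∨ (∃ n : N', n ≠ 0))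
    (l : G ≃ₗ[R] G')
    (hLie : ∀ x y : G, l (x * y - y * x) = l x * l y - l y * l x)
    (h1 : ∀ q : G' →ₗ[R] G' →ₗ[R] G', (∀ x : G', q x x * x = x * q x x) →
            ∃ z ∈ Subring.center G', ∃ μ : G' →ₗ[R] G',
              (∀ x, μ x ∈ Subring.center G') ∧
              ∃ p : G' →ₗ[R] G' →ₗ[R] G', (∀ x y, p x y ∈ Subring.center G') ∧
                ∀ x : G', q x x = z * x ^ 2 + μ x * x + p x x)
    (h2 : (∃ a a' : A, a * a' ≠ a' * a) ∨ (∃ b b' : B, b * b' ≠ b' * b))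
    (h2' : (∃ a a' : A', a * a' ≠ a' * a) ∨ (∃ b b' : B', b * b' ≠ b' * b))
    (h3 : ∀ (a : A') (b : B'),
            (∀ m : M', h'.ιA a * h'.ιM m * h'.ιB b = 0) → a = 0 ∨ b = 0) :
    ∃ m : G →ₗ[R] G', ∃ nm : G →ₗ[R] G',
      (∀ x : G, l x = m x + nm x) ∧
      Function.Injective m ∧
      ((∀ x y : G, m (x * y) = m x * m y) ∨ (∀ x y : G, m (x * y) = -(m y * m x))) ∧
      (∀ x : G, nm x ∈ Subring.center G') ∧
      (∀ x y : G, nm (x * y - y * x) = 0) ∧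
      ((Subring.center G' : Set G') = Set.range (algebraMap R G') →
        Function.Surjective m) :=
  stmt13_general R A B M N G A' B' M' N' G' h h' l hLie h1 h2' h3
end
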